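/- Let H be a complex Hilbert space and let e, x ∈ B(H) with e a minimal partial isometry, ‖x‖ ≤ 1, and ‖e - x‖ = 2. Then e e* x e* e = - e, i.e. x agrees with -e on the support of e. -/

import Mathlib

/-!
Write `e = η ⊗ ξ` with unit vectors `ξ, η`, and split a unit vector as `u = a ξ + w` with
`w ⊥ ξ`. Then `(e - x) u = a η - x u = a (η - x ξ) - x w`, so
`‖(e - x) u‖ ≤ min (|a| + 1) (|a| ‖η - x ξ‖ + ‖w‖)` with `|a|² + ‖w‖² = 1`: a vector nearly
attaining `‖e - x‖ = 2` must have `|a|` close to `1` and `w` small, which forces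
`‖η - x ξ‖ = 2`. By strict convexity of `H` this means `x ξ = -η`, and then
`e e* x e* e = ⟪η, x ξ⟫ e = -e`.
-/

open scoped InnerProductSpace

variable {H : Type*} [NormedAddCommGroup H] [InnerProductSpace ℂ H] [CompleteSpace H]

/-- The rank-one operator `η ⊗ ξ : x ↦ ⟨x, ξ⟩ η`. -/
noncomputable def rankOne (η ξ : H) : H →L[ℂ] H := (innerSL ℂ ξ).smulRight η

/-- Minimal (rank-one) partial isometries in `B(H)`. -/
def IsMinPI (v : H →L[ℂ] H) : Prop := ∃ ξ η : H, ‖ξ‖ = 1 ∧ ‖η‖ = 1 ∧ v = rankOne η ξ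

theorem min_add_one_mul_add_le {t s D : ℝ} (hts : t ^ 2 + s ^ 2 ≤ 1) (hD₀ : 0 ≤ D)
    (hD₂ : D ≤ 2) : min (t + 1) (t * D + s) ≤ 2 - (2 - D) ^ 2 / 8 := by
  by_cases h : t ≤ 1 - (2 - D) ^ 2 / 8
  · exact (min_le_left _ _).trans (by linarith)
  · have ht₁ : t ≤ 1 := by nlinarith
    have hs' : s ≤ (2 - D) / 2 := by nlinarith
    refine (min_le_right _ _).trans ?_
    nlinarith

theorem norm_inner_sq_add_norm_sub_sq {𝕜 E : Type*} [RCLike 𝕜] [NormedAddCommGroup E]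
    [InnerProductSpace 𝕜 E] {ξ : E} (hξ : ‖ξ‖ = 1) (u : E) :
    ‖⟪ξ, u⟫_𝕜‖ ^ 2 + ‖u - ⟪ξ, u⟫_𝕜 • ξ‖ ^ 2 = ‖u‖ ^ 2 := by
  have horth : ⟪⟪ξ, u⟫_𝕜 • ξ, u - ⟪ξ, u⟫_𝕜 • ξ⟫_𝕜 = 0 := by
    rw [inner_smul_left, inner_sub_right, inner_smul_right, inner_self_eq_norm_sq_to_K, hξ]
    simp
  have := norm_add_sq_eq_norm_sq_add_norm_sq_of_inner_eq_zero _ _ horth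
  rw [add_sub_cancel, norm_smul, hξ, mul_one] at this
  rw [sq, sq, sq, this]

theorem eq_neg_of_norm_sub_eq_two {E : Type*} [NormedAddCommGroup E] [NormedSpace ℝ E]
    [StrictConvexSpace ℝ E] {v y : E} (hv : ‖v‖ ≤ 1) (hy : ‖y‖ ≤ 1) (h : ‖v - y‖ = 2) :
    y = -v := by
  have htri := norm_sub_le v y
  have hv₁ : ‖v‖ = ‖-y‖ := by rw [norm_neg]; linarith
  have hadd : ‖v + -y‖ = ‖v‖ + ‖-y‖ := by rw [← sub_eq_add_neg, norm_neg]; linarith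
  rw [eq_of_norm_eq_of_norm_add_eq hv₁ hadd, neg_neg]

omit [CompleteSpace H] in
lemma rankOne_apply (η ξ u : H) : rankOne η ξ u = ⟪ξ, u⟫_ℂ • η := rfl

lemma star_rankOne (η ξ : H) : star (rankOne η ξ) = rankOne ξ η := by
  rw [ContinuousLinearMap.star_eq_adjoint, eq_comm, ContinuousLinearMap.eq_adjoint_iff]
  intro u v
  simp only [rankOne_apply, inner_smul_left, inner_smul_right, inner_conj_symm]
  ring

omit [CompleteSpace H] in
theorem norm_rankOne_sub_le {ξ η : H} (hξ : ‖ξ‖ = 1) (hη : ‖η‖ = 1) {x : H →L[ℂ] H}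
    (hx : ‖x‖ ≤ 1) : ‖rankOne η ξ - x‖ ≤ 2 - (2 - ‖η - x ξ‖) ^ 2 / 8 := by
  have hxξ : ‖x ξ‖ ≤ 1 := (x.unit_le_opNorm ξ hξ.le).trans hx
  have hD : ‖η - x ξ‖ ≤ 2 := (norm_sub_le _ _).trans (by linarith)
  refine ContinuousLinearMap.opNorm_le_of_unit_norm (by nlinarith [norm_nonneg (η - x ξ)])
    fun u hu => ?_
  set a := ⟪ξ, u⟫_ℂ
  set w := u - a • ξ
  have hpyth : ‖a‖ ^ 2 + ‖w‖ ^ 2 ≤ 1 := by rw [norm_inner_sq_add_norm_sub_sq hξ, hu, one_pow]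
  have hu' : u = a • ξ + w := (add_sub_cancel _ _).symm
  have hcoord : (rankOne η ξ - x) u = a • η - x u := rfl
  have hsplit : (rankOne η ξ - x) u = a • (η - x ξ) - x w := by
    rw [hcoord, smul_sub, hu', map_add, map_smul]
    abel
  have h₁ : ‖(rankOne η ξ - x) u‖ ≤ ‖a‖ + 1 := by
    rw [hcoord]
    refine (norm_sub_le _ _).trans (add_le_add (by rw [norm_smul, hη, mul_one]) ?_)
    exact (x.unit_le_opNorm u hu.le).trans hx
  have h₂ : ‖(rankOne η ξ - x) u‖ ≤ ‖a‖ * ‖η - x ξ‖ + ‖w‖ := by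
    rw [hsplit, ← norm_smul]
    refine (norm_sub_le _ _).trans (add_le_add le_rfl ?_)
    simpa using x.le_of_opNorm_le hx w
  exact (le_min h₁ h₂).trans (min_add_one_mul_add_le hpyth (norm_nonneg _) hD)

theorem stmt10 (e x : H →L[ℂ] H) (he : IsMinPI e) (hx : ‖x‖ ≤ 1)
    (hdist : ‖e - x‖ = 2) :
    (e * star e) * x * (star e * e) = -e := by
  obtain ⟨ξ, η, hξ, hη, rfl⟩ := he
  have hD : ‖η - x ξ‖ = 2 := by
    have hbound := norm_rankOne_sub_le hξ hη hx
    rw [hdist] at hbound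
    nlinarith [sq_nonneg (2 - ‖η - x ξ‖)]
  let := InnerProductSpace.rclikeToReal ℂ H
  have hxξ : x ξ = -η :=
    eq_neg_of_norm_sub_eq_two hη.le ((x.unit_le_opNorm ξ hξ.le).trans hx) hD
  ext u
  simp [star_rankOne, rankOne_apply, hxξ, inner_self_eq_norm_sq_to_K, hξ, hη]
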